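/- arXiv:math/0305433 — 7 statements merged into one kernel-verified Lean document; each statement's English description precedes it below -/
import Mathlib

section
/- Let Q be a convex polygon in R^2. The incenter set IC(Q), i.e., the set of maximizers of sm_Q(p) = min_{e ∈ ED(Q)} D_e(p) over Q, is a (possibly degenerate) line segment. In particular, IC(Q) is convex and contains no three non-collinear points. -/
open RealInnerProductSpace

theorem incenter_set_segment {E : Type*} [Fintype E] [Nonempty E]
    (n : E → EuclideanSpace ℝ (Fin 2)) (c : E → ℝ) (hn : ∀ e, ‖n e‖ = 1)
    (Q : Set (EuclideanSpace ℝ (Fin 2)))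
    (hQ : Q = {p | ∀ e, c e ≤ ⟪n e, p⟫})
    (hQc : IsCompact Q) (hQne : Q.Nonempty)
    (sm : EuclideanSpace ℝ (Fin 2) → ℝ)
    (hsm : sm = fun p =>
      Finset.univ.inf' Finset.univ_nonempty (fun e => ⟪n e, p⟫ - c e))
    (IC : Set (EuclideanSpace ℝ (Fin 2)))
    (hIC : IC = {p | p ∈ Q ∧ ∀ q ∈ Q, sm q ≤ sm p}) :
    Convex ℝ IC ∧ Collinear ℝ IC := by
  have hsmle : ∀ p e, sm p ≤ ⟪n e, p⟫ - c e := by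
    intro p e
    rw [hsm]
    exact Finset.inf'_le _ (Finset.mem_univ e)
  have hQconv : Convex ℝ Q := by
    rw [hQ]
    have : {p : EuclideanSpace ℝ (Fin 2) | ∀ e, c e ≤ ⟪n e, p⟫} =
        ⋂ e, {p | c e ≤ ⟪n e, p⟫} := by ext p; simp
    rw [this]
    exact convex_iInter fun e => convex_halfSpace_ge
      (LinearMap.isLinear (innerSL ℝ (n e)).toLinearMap) (c e)
  have hconv : Convex ℝ IC := by
    intro x hx y hy a b ha hb hab
    rw [hIC] at hx hy ⊢
    obtain ⟨hxQ, hxm⟩ := hx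
    obtain ⟨hyQ, hym⟩ := hy
    refine ⟨hQconv hxQ hyQ ha hb hab, fun q hq => ?_⟩
    have h1 : sm q ≤ sm x := hxm q hq
    have h2 : sm x ≤ sm (a • x + b • y) := by
      conv_rhs => rw [hsm]
      apply Finset.le_inf'
      intro e _
      have e1 : sm x ≤ ⟪n e, x⟫ - c e := hsmle x e
      have e2 : sm x ≤ ⟪n e, y⟫ - c e := le_trans (hym x hxQ) (hsmle y e)
      have he : ⟪n e, a • x + b • y⟫ = a * ⟪n e, x⟫ + b * ⟪n e, y⟫ := by
        rw [inner_add_right, real_inner_smul_right, real_inner_smul_right]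
      rw [he]
      have h3 : a * sm x + b * sm x ≤ a * (⟪n e, x⟫ - c e) + b * (⟪n e, y⟫ - c e) :=
        add_le_add (mul_le_mul_of_nonneg_left e1 ha) (mul_le_mul_of_nonneg_left e2 hb)
      have h4 : a * sm x + b * sm x = sm x := by rw [← add_mul, hab, one_mul]
      have h5 : a * (⟪n e, x⟫ - c e) + b * (⟪n e, y⟫ - c e)
          = a * ⟪n e, x⟫ + b * ⟪n e, y⟫ - (a + b) * c e := by ring
      rw [hab, one_mul] at h5
      linarith
    linarith
  refine ⟨hconv, ?_⟩
  by_contra hcol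
  have hne : IC.Nonempty := by
    rcases Set.eq_empty_or_nonempty IC with h | h
    · exact absurd (h ▸ collinear_empty ℝ _) hcol
    · exact h
  -- the affine span of IC is everything
  have hspan : affineSpan ℝ IC = ⊤ := by
    rw [AffineSubspace.affineSpan_eq_top_iff_vectorSpan_eq_top_of_nonempty ℝ _ _ hne]
    have h1 : ¬ Module.finrank ℝ (vectorSpan ℝ IC) ≤ 1 := by
      rw [← collinear_iff_finrank_le_one]; exact hcol
    have h2 : Module.finrank ℝ (vectorSpan ℝ IC) ≤ 2 := by
      have := Submodule.finrank_le (vectorSpan ℝ IC)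
      rwa [finrank_euclideanSpace_fin] at this
    apply Submodule.eq_top_of_finrank_eq
    rw [finrank_euclideanSpace_fin]
    omega
  obtain ⟨p, hp⟩ := (hconv.interior_nonempty_iff_affineSpan_eq_top).mpr hspan
  obtain ⟨ε, hε, hball⟩ := Metric.isOpen_iff.mp isOpen_interior p hp
  have hpIC : p ∈ IC := interior_subset hp
  rw [hIC] at hpIC
  have key : ∀ e, sm p + ε / 2 ≤ ⟪n e, p⟫ - c e := by
    intro e
    set q := p - (ε / 2) • n e with hq
    have hqIC : q ∈ IC := by
      apply interior_subset
      apply hball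
      rw [Metric.mem_ball, dist_eq_norm, hq]
      simp only [sub_sub_cancel_left, norm_neg, norm_smul, hn e, mul_one,
        Real.norm_eq_abs, abs_of_pos (by linarith : (0:ℝ) < ε / 2)]
      linarith
    rw [hIC] at hqIC
    have h1 : sm p ≤ sm q := hqIC.2 p hpIC.1
    have h2 : sm q ≤ ⟪n e, q⟫ - c e := hsmle q e
    have h3 : ⟪n e, q⟫ = ⟪n e, p⟫ - ε / 2 := by
      rw [hq, inner_sub_right, real_inner_smul_right, real_inner_self_eq_norm_sq, hn e]
      ring
    rw [h3] at h2
    linarith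
  have : sm p + ε / 2 ≤ sm p := by
    conv_rhs => rw [hsm]
    exact Finset.le_inf' _ _ fun e _ => key e
  linarith
end

section
/- Let Q be a convex polygon in R^2 and p ∈ Q. Suppose 0 lies in the interior of the convex hull of the set of inward unit normals n_e over the edges e of Q achieving sm_Q(p) = D_e(p). Then the incenter set of Q is the singleton {p}. -/
open RealInnerProductSpace

theorem incenter_interior_criterion {E : Type*} [Fintype E] [Nonempty E]
    (n : E → EuclideanSpace ℝ (Fin 2)) (c : E → ℝ) (hn : ∀ e, ‖n e‖ = 1)
    (Q : Set (EuclideanSpace ℝ (Fin 2)))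
    (hQ : Q = {p | ∀ e, c e ≤ ⟪n e, p⟫}) (hQc : IsCompact Q)
    (D : E → EuclideanSpace ℝ (Fin 2) → ℝ)
    (hD : D = fun e p => ⟪n e, p⟫ - c e)
    (sm : EuclideanSpace ℝ (Fin 2) → ℝ)
    (hsm : sm = fun p => Finset.univ.inf' Finset.univ_nonempty (fun e => D e p))
    (p : EuclideanSpace ℝ (Fin 2)) (hp : p ∈ Q)
    (h0 : (0 : EuclideanSpace ℝ (Fin 2)) ∈ interior (convexHull ℝ
      {u | ∃ e, D e p = sm p ∧ u = n e})) :
    {x | x ∈ Q ∧ ∀ q ∈ Q, sm q ≤ sm x} = {p} := by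
  have hDq : ∀ e q, sm q ≤ D e q := by
    intro e q
    rw [hsm]
    exact Finset.inf'_le _ (Finset.mem_univ e)
  have key : ∀ v : EuclideanSpace ℝ (Fin 2), v ≠ 0 →
      ∃ e, D e p = sm p ∧ (⟪n e, v⟫ : ℝ) < 0 := by
    intro v hv
    by_contra hcon
    push_neg at hcon
    have hsub : {u : EuclideanSpace ℝ (Fin 2) | ∃ e, D e p = sm p ∧ u = n e} ⊆
        {u : EuclideanSpace ℝ (Fin 2) | 0 ≤ ⟪u, v⟫} := by
      rintro u ⟨e, he, rfl⟩
      exact hcon e he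
    have hlin : IsLinearMap ℝ (fun u : EuclideanSpace ℝ (Fin 2) => (⟪u, v⟫ : ℝ)) :=
      ⟨fun x y => inner_add_left x y v, fun a x => real_inner_smul_left x v a⟩
    have hconv : Convex ℝ {u : EuclideanSpace ℝ (Fin 2) | 0 ≤ ⟪u, v⟫} :=
      convex_halfSpace_ge hlin 0
    have hhull := convexHull_min hsub hconv
    obtain ⟨ε, hε, hball⟩ := Metric.isOpen_iff.mp isOpen_interior 0 h0
    set w : EuclideanSpace ℝ (Fin 2) := -((ε/2) • ‖v‖⁻¹ • v) with hw
    have hvnorm : (0:ℝ) < ‖v‖ := norm_pos_iff.mpr hv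
    have hwnorm : ‖w‖ = ε/2 := by
      rw [hw, norm_neg, norm_smul, norm_smul, norm_inv, norm_norm,
        inv_mul_cancel₀ (ne_of_gt hvnorm), mul_one, Real.norm_eq_abs,
        abs_of_pos (by linarith)]
    have hwmem : w ∈ Metric.ball (0 : EuclideanSpace ℝ (Fin 2)) ε := by
      rw [Metric.mem_ball, dist_zero_right, hwnorm]
      linarith
    have hwhull := hhull (interior_subset (hball hwmem))
    have : (⟪w, v⟫ : ℝ) = -((ε/2) * (‖v‖⁻¹ * ⟪v, v⟫)) := by
      rw [hw, inner_neg_left, real_inner_smul_left, real_inner_smul_left]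
    rw [Set.mem_setOf_eq, this, real_inner_self_eq_norm_sq] at hwhull
    have : (0:ℝ) < (ε/2) * (‖v‖⁻¹ * ‖v‖^2) := by positivity
    linarith
  have strict : ∀ q, q ≠ p → sm q < sm p := by
    intro q hq
    obtain ⟨e, he, hlt⟩ := key (q - p) (sub_ne_zero.mpr hq)
    have hEq : D e q = D e p + ⟪n e, q - p⟫ := by
      rw [hD]; simp only [inner_sub_right]; ring
    calc sm q ≤ D e q := hDq e q
      _ = D e p + ⟪n e, q - p⟫ := hEq
      _ < D e p := by linarith
      _ = sm p := he
  ext x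
  simp only [Set.mem_setOf_eq, Set.mem_singleton_iff]
  constructor
  · rintro ⟨hxQ, hxmax⟩
    by_contra hne
    have h1 := hxmax p hp
    have h2 := strict x hne
    linarith
  · intro hx
    subst hx
    refine ⟨hp, fun q _ => ?_⟩
    rcases eq_or_ne q x with rfl | hq
    · exact le_refl _
    · exact (strict q hq).le
end

section
/- Let Q be a convex polygon in R^2, p ∈ Q with p ≠ CC(Q) (the circumcenter of Q), and let v be a vertex of Q farthest from p. Then (p − CC(Q)) · (p − v) ≥ ‖p − CC(Q)‖²/2. -/
open RealInnerProductSpace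

theorem circumcenter_inner_bound (V : Finset (EuclideanSpace ℝ (Fin 2)))
    (hV : V.Nonempty)
    (lg : EuclideanSpace ℝ (Fin 2) → ℝ)
    (hlg : lg = fun x => V.sup' hV fun w => ‖x - w‖)
    (cc p : EuclideanSpace ℝ (Fin 2))
    (hcc : ∀ q, q ≠ cc → lg cc < lg q)
    (hp : p ∈ convexHull ℝ (V : Set (EuclideanSpace ℝ (Fin 2))))
    (hpcc : p ≠ cc)
    (v : EuclideanSpace ℝ (Fin 2)) (hv : v ∈ V) (hfar : ‖p - v‖ = lg p) :
    ⟪p - cc, p - v⟫ ≥ ‖p - cc‖ ^ 2 / 2 := by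
  have h1 : ‖cc - v‖ ≤ lg cc := by
    rw [hlg]; exact Finset.le_sup' (fun w => ‖cc - w‖) hv
  have h2 : lg cc < ‖p - v‖ := by rw [hfar]; exact hcc p hpcc
  have h3 : ‖cc - v‖ < ‖p - v‖ := h1.trans_lt h2
  have h4 : ‖cc - v‖ ^ 2 < ‖p - v‖ ^ 2 := by
    exact pow_lt_pow_left₀ h3 (norm_nonneg _) (by norm_num)
  have e : p - v = (p - cc) + (cc - v) := by abel
  have key : ‖p - v‖ ^ 2 = ‖p - cc‖ ^ 2 + 2 * ⟪p - cc, cc - v⟫ + ‖cc - v‖ ^ 2 := by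
    rw [e]; exact norm_add_sq_real _ _
  have inner_eq : ⟪p - cc, p - v⟫ = ‖p - cc‖ ^ 2 + ⟪p - cc, cc - v⟫ := by
    rw [e, inner_add_right, real_inner_self_eq_norm_sq]
  nlinarith
end

section
/- Let Q be a convex polygon in R^2 and p ∈ Q with p not in the incenter set IC(Q). Then there exists an edge e of Q with D_e(p) = sm_Q(p) such that (x̄ − p) · n_e > 0 for every x̄ ∈ IC(Q); in particular, if 0 lies in the interior of co{n_e : D_e(p) = sm_Q(p)}, then IC(Q) = {p}. -/
open RealInnerProductSpace

theorem incenter_direction {E : Type*} [Fintype E] [Nonempty E]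
    (n : E → EuclideanSpace ℝ (Fin 2)) (c : E → ℝ) (hn : ∀ e, ‖n e‖ = 1)
    (Q : Set (EuclideanSpace ℝ (Fin 2)))
    (hQ : Q = {p | ∀ e, c e ≤ ⟪n e, p⟫}) (hQc : IsCompact Q)
    (D : E → EuclideanSpace ℝ (Fin 2) → ℝ)
    (hD : D = fun e p => ⟪n e, p⟫ - c e)
    (sm : EuclideanSpace ℝ (Fin 2) → ℝ)
    (hsm : sm = fun p => Finset.univ.inf' Finset.univ_nonempty (fun e => D e p))
    (IC : Set (EuclideanSpace ℝ (Fin 2)))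
    (hIC : IC = {x | x ∈ Q ∧ ∀ q ∈ Q, sm q ≤ sm x})
    (p : EuclideanSpace ℝ (Fin 2)) (hp : p ∈ Q) :
    (p ∉ IC → ∃ e, D e p = sm p ∧ ∀ x ∈ IC, ⟪x - p, n e⟫ > 0) ∧
    ((0 : EuclideanSpace ℝ (Fin 2)) ∈ interior (convexHull ℝ
        {u | ∃ e, D e p = sm p ∧ u = n e}) → IC = {p}) := by
  -- continuity of sm
  have hsmc : Continuous sm := by
    rw [hsm]
    exact Continuous.finset_inf'_apply _ fun e _ => by
      rw [hD]
      exact ((continuous_const.inner continuous_id).sub continuous_const)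
  -- IC is nonempty
  have hICne : IC.Nonempty := by
    obtain ⟨x, hxQ, hxmax⟩ := hQc.exists_isMaxOn ⟨p, hp⟩ hsmc.continuousOn
    exact ⟨x, hIC ▸ ⟨hxQ, fun q hq => hxmax hq⟩⟩
  -- sm ≤ D e everywhere
  have hsmle : ∀ e x, sm x ≤ D e x := fun e x => by
    rw [hsm]; exact Finset.inf'_le _ (Finset.mem_univ e)
  -- inner product identity
  have hinner : ∀ e (x : EuclideanSpace ℝ (Fin 2)),
      ⟪x - p, n e⟫ = D e x - D e p := fun e x => by
    rw [hD, real_inner_comm]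
    simp [inner_sub_right]
  -- Part 1
  have part1 : p ∉ IC → ∃ e, D e p = sm p ∧ ∀ x ∈ IC, ⟪x - p, n e⟫ > 0 := by
    intro hpIC
    obtain ⟨e, -, he⟩ := Finset.exists_mem_eq_inf' (Finset.univ_nonempty (α := E))
      (fun e => D e p)
    refine ⟨e, by rw [hsm]; exact he.symm, ?_⟩
    intro x hx
    rw [hIC] at hx
    have hlt : sm p < sm x := by
      by_contra hle
      push_neg at hle
      exact hpIC (hIC ▸ ⟨hp, fun q hq => le_trans (hx.2 q hq) hle⟩)
    have : D e p = sm p := by rw [hsm]; exact he.symm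
    rw [hinner]
    linarith [hsmle e x]
  refine ⟨part1, ?_⟩
  -- Part 2
  intro h0
  set S := {u | ∃ e, D e p = sm p ∧ u = n e} with hS
  -- key: no nonzero v has nonneg inner product with all of S
  have key : ∀ v : EuclideanSpace ℝ (Fin 2), v ≠ 0 →
      (∀ u ∈ S, (0:ℝ) ≤ ⟪v, u⟫) → False := by
    intro v hv hpos
    have hconv : Convex ℝ {u : EuclideanSpace ℝ (Fin 2) | (0:ℝ) ≤ ⟪v, u⟫} := by
      intro x hx y hy a b ha hb hab
      simp only [Set.mem_setOf_eq] at *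
      rw [inner_add_right, real_inner_smul_right, real_inner_smul_right]
      positivity
    have hsub : convexHull ℝ S ⊆ {u | (0:ℝ) ≤ ⟪v, u⟫} := convexHull_min hpos hconv
    obtain ⟨ε, hε, hball⟩ := Metric.mem_nhds_iff.mp (mem_interior_iff_mem_nhds.mp h0)
    have hvn : (0:ℝ) < ‖v‖ := norm_pos_iff.mpr hv
    set w : EuclideanSpace ℝ (Fin 2) := (-(ε/2/‖v‖)) • v with hw
    have hwball : w ∈ Metric.ball (0 : EuclideanSpace ℝ (Fin 2)) ε := by
      rw [Metric.mem_ball, dist_zero_right, hw, norm_smul]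
      simp only [norm_neg, Real.norm_eq_abs, abs_of_pos (by positivity : (0:ℝ) < ε/2/‖v‖)]
      rw [div_mul_cancel₀ _ hvn.ne']
      linarith
    have hwS : (0:ℝ) ≤ ⟪v, w⟫ := hsub (hball hwball)
    rw [hw, real_inner_smul_right, real_inner_self_eq_norm_sq] at hwS
    have : (0:ℝ) < (ε/2/‖v‖) * ‖v‖^2 := by positivity
    linarith
  -- p ∈ IC
  have hpIC : p ∈ IC := by
    by_contra hpIC
    obtain ⟨x, hx⟩ := hICne
    have hxIC := hx
    rw [hIC] at hx
    have hlt : sm p < sm x := by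
      by_contra hle
      push_neg at hle
      exact hpIC (hIC ▸ ⟨hp, fun q hq => le_trans (hx.2 q hq) hle⟩)
    refine key (x - p) (sub_ne_zero.mpr (by rintro rfl; exact lt_irrefl _ hlt)) ?_
    rintro u ⟨e, hep, rfl⟩
    rw [hinner]
    linarith [hsmle e x]
  -- IC = {p}
  ext x
  simp only [Set.mem_singleton_iff]
  constructor
  · intro hx
    by_contra hne
    have hxIC := hx
    rw [hIC] at hx
    have hpIC' := hpIC
    rw [hIC] at hpIC'
    have heq : sm x = sm p := le_antisymm (hpIC'.2 x hx.1) (hx.2 p hp)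
    refine key (x - p) (sub_ne_zero.mpr hne) ?_
    rintro u ⟨e, hep, rfl⟩
    rw [hinner]
    have := hsmle e x
    linarith
  · rintro rfl; exact hpIC
end

section
/- Let f: R^N → R be locally Lipschitz near x and suppose the least-norm element LN(∂f)(x) of its generalized gradient at x is nonzero. Then there exists T > 0 such that for all 0 < t < T, f(x − t·LN(∂f)(x)) ≤ f(x) − (t/2)‖LN(∂f)(x)‖². For a convex function f this descent property holds with ∂f the convex subdifferential. -/
/-!
For convex `f` the difference quotients `(f (x + t • v) - f x) / t` increase with `t`, so their
infimum over `t > 0` is the one-sided directional derivative `f'(x; v)`, a sublinear function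
of `v`. Hahn–Banach, applied to `f'(x; ·)` and the line through `v`, yields a subgradient `G`
with `⟪G, v⟫ = f'(x; v)`. Take `v = -g₀`: since `g₀` is the least-norm point of the convex set
`∂f(x)`, `⟪g₀, G⟫ ≥ ‖g₀‖²`, hence `f'(x; -g₀) ≤ -‖g₀‖² < -‖g₀‖² / 2`, and the difference
quotients along `-g₀` stay below `-‖g₀‖² / 2` for all small `t > 0`.
-/

open Set Filter Topology RealInnerProductSpace

theorem exists_linear_eq_le_of_sublinear {E : Type*} [AddCommGroup E] [Module ℝ E] (N : E → ℝ)
    (N_hom : ∀ c : ℝ, 0 < c → ∀ x, N (c • x) = c * N x) (N_add : ∀ x y, N (x + y) ≤ N x + N y)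
    (v : E) : ∃ ℓ : E →ₗ[ℝ] ℝ, ℓ v = N v ∧ ∀ y, ℓ y ≤ N y := by
  have N_zero : N 0 = 0 := by simpa [two_mul] using N_hom 2 two_pos 0
  have hspan : ∀ c : ℝ, c * N v ≤ N (c • v) := by
    intro c
    rcases lt_trichotomy c 0 with hc | rfl | hc
    · have := N_add (c • v) ((-c) • v)
      rw [← add_smul, add_neg_cancel, zero_smul, N_zero, N_hom (-c) (neg_pos.2 hc)] at this
      linarith
    · simp [N_zero]
    · exact (N_hom c hc v).ge
  obtain ⟨ℓ, hℓ, hle⟩ := exists_extension_of_le_sublinear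
      (LinearPMap.mkSpanSingleton' (σ := RingHom.id ℝ) v (N v) fun c hc =>
        (smul_eq_zero.1 hc).elim (fun h => by simp [h]) fun h => by simp [h, N_zero])
      N N_hom N_add <| by
    rintro ⟨_, hz⟩
    obtain ⟨c, rfl⟩ := Submodule.mem_span_singleton.1 hz
    rw [LinearPMap.mkSpanSingleton'_apply]
    exact hspan c
  exact ⟨ℓ, (hℓ ⟨v, Submodule.mem_span_singleton_self v⟩).trans
    (LinearPMap.mkSpanSingleton'_apply_self _ _ _ _), hle⟩

section DirectionalDerivative

variable {E : Type*} [AddCommGroup E] [Module ℝ E] {f : E → ℝ}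

noncomputable def dirSecant (f : E → ℝ) (x v : E) (t : ℝ) : ℝ := (f (x + t • v) - f x) / t

noncomputable def rightDirDeriv (f : E → ℝ) (x v : E) : ℝ := sInf (dirSecant f x v '' Ioi 0)

namespace ConvexOn

theorem dirSecant_mono (hf : ConvexOn ℝ univ f) (x v : E) {s t : ℝ} (hs : s ≠ 0) (ht : t ≠ 0)
    (hst : s ≤ t) : dirSecant f x v s ≤ dirSecant f x v t := by
  have hline := (hf.translate_right x).comp_linearMap (LinearMap.toSpanSingleton ℝ E v)
  simpa [dirSecant] using hline.secant_mono (a := 0) trivial trivial trivial hs ht hst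

theorem monotoneOn_dirSecant (hf : ConvexOn ℝ univ f) (x v : E) :
    MonotoneOn (dirSecant f x v) (Ioi 0) :=
  fun _ hs _ ht hst => hf.dirSecant_mono x v (ne_of_gt hs) (ne_of_gt ht) hst

theorem bddBelow_dirSecant (hf : ConvexOn ℝ univ f) (x v : E) :
    BddBelow (dirSecant f x v '' Ioi 0) := by
  refine ⟨dirSecant f x v (-1), ?_⟩
  rintro _ ⟨t, ht, rfl⟩
  exact hf.dirSecant_mono x v (by norm_num) (ne_of_gt ht) (by linarith [mem_Ioi.1 ht])

theorem rightDirDeriv_le_dirSecant (hf : ConvexOn ℝ univ f) (x v : E) {t : ℝ} (ht : 0 < t) :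
    rightDirDeriv f x v ≤ dirSecant f x v t :=
  csInf_le (hf.bddBelow_dirSecant x v) ⟨t, ht, rfl⟩

theorem tendsto_dirSecant (hf : ConvexOn ℝ univ f) (x v : E) :
    Tendsto (dirSecant f x v) (𝓝[>] 0) (𝓝 (rightDirDeriv f x v)) :=
  (hf.monotoneOn_dirSecant x v).tendsto_nhdsGT (hf.bddBelow_dirSecant x v)

theorem exists_forall_dirSecant_lt (hf : ConvexOn ℝ univ f) (x v : E) {c : ℝ}
    (h : rightDirDeriv f x v < c) : ∃ T > 0, ∀ t, 0 < t → t < T → dirSecant f x v t < c := by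
  obtain ⟨_, ⟨T, hT, rfl⟩, hTc⟩ := exists_lt_of_csInf_lt (image_nonempty.2 nonempty_Ioi) h
  exact ⟨T, hT, fun t ht htT => (hf.monotoneOn_dirSecant x v ht hT htT.le).trans_lt hTc⟩

theorem rightDirDeriv_smul (hf : ConvexOn ℝ univ f) (x v : E) {c : ℝ} (hc : 0 < c) :
    rightDirDeriv f x (c • v) = c * rightDirDeriv f x v := by
  have hsec : dirSecant f x (c • v) = fun t => c * dirSecant f x v (c * t) := by
    ext t
    rw [dirSecant, dirSecant, smul_smul, mul_comm t c, mul_div_assoc', mul_div_mul_left _ _ hc.ne']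
  have hmul : Tendsto (c * ·) (𝓝[>] 0) (𝓝[>] 0) := by
    have := (tendsto_comap : Tendsto (c * ·) (comap (c * ·) (𝓝[>] 0)) (𝓝[>] 0))
    rwa [comap_mulLeft_nhdsGT_zero hc] at this
  refine tendsto_nhds_unique (hf.tendsto_dirSecant x (c • v)) ?_
  rw [hsec]
  exact ((hf.tendsto_dirSecant x v).comp hmul).const_mul c

theorem dirSecant_add_le (hf : ConvexOn ℝ univ f) (x u v : E) {t : ℝ} (ht : 0 < t) :
    dirSecant f x (u + v) t ≤ dirSecant f x u (2 * t) + dirSecant f x v (2 * t) := by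
  have hmid : f (x + t • (u + v)) ≤ (f (x + (2 * t) • u) + f (x + (2 * t) • v)) / 2 := by
    have hpt : x + t • (u + v) =
        (1 / 2 : ℝ) • (x + (2 * t) • u) + (1 / 2 : ℝ) • (x + (2 * t) • v) := by
      module
    have := hf.2 (mem_univ (x + (2 * t) • u)) (mem_univ (x + (2 * t) • v))
      (by norm_num : (0 : ℝ) ≤ 1 / 2) (by norm_num : (0 : ℝ) ≤ 1 / 2) (by norm_num)
    rw [hpt]
    simp only [smul_eq_mul] at this
    linarith
  rw [dirSecant, dirSecant, dirSecant, ← add_div, div_le_div_iff₀ ht (by positivity)]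
  nlinarith

theorem rightDirDeriv_add_le (hf : ConvexOn ℝ univ f) (x u v : E) :
    rightDirDeriv f x (u + v) ≤ rightDirDeriv f x u + rightDirDeriv f x v := by
  refine ge_of_tendsto ((hf.tendsto_dirSecant x u).add (hf.tendsto_dirSecant x v)) ?_
  filter_upwards [self_mem_nhdsWithin] with t (ht : 0 < t)
  calc rightDirDeriv f x (u + v) ≤ dirSecant f x (u + v) (t / 2) :=
        hf.rightDirDeriv_le_dirSecant x _ (half_pos ht)
    _ ≤ dirSecant f x u t + dirSecant f x v t := by
        simpa only [mul_div_cancel₀ t two_ne_zero] using hf.dirSecant_add_le x u v (half_pos ht)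

theorem exists_linear_subgradient_eq_rightDirDeriv (hf : ConvexOn ℝ univ f) (x v : E) :
    ∃ ℓ : E →ₗ[ℝ] ℝ, ℓ v = rightDirDeriv f x v ∧ ∀ y, f x + ℓ (y - x) ≤ f y := by
  obtain ⟨ℓ, hℓv, hℓle⟩ := exists_linear_eq_le_of_sublinear (rightDirDeriv f x)
    (fun c hc w => hf.rightDirDeriv_smul x w hc) (hf.rightDirDeriv_add_le x) v
  refine ⟨ℓ, hℓv, fun y => ?_⟩
  have := (hℓle (y - x)).trans (hf.rightDirDeriv_le_dirSecant x (y - x) one_pos)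
  simp only [dirSecant, one_smul, add_sub_cancel, div_one] at this
  linarith

end ConvexOn

end DirectionalDerivative

section Subdifferential

variable {F : Type*} [NormedAddCommGroup F] [InnerProductSpace ℝ F]

def subdifferential (f : F → ℝ) (x : F) : Set F := {g | ∀ y, f x + ⟪g, y - x⟫ ≤ f y}

theorem convex_subdifferential (f : F → ℝ) (x : F) : Convex ℝ (subdifferential f x) := by
  intro g hg h hh a b ha hb hab y
  have hcomb :=
    add_le_add (mul_le_mul_of_nonneg_left (hg y) ha) (mul_le_mul_of_nonneg_left (hh y) hb)
  rw [inner_add_left, real_inner_smul_left, real_inner_smul_left]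
  linear_combination hcomb + (f y - f x) * hab

theorem Convex.norm_sq_le_inner_of_isMinOn_norm {K : Set F} (hK : Convex ℝ K) {g₀ : F}
    (hg₀ : g₀ ∈ K) (hmin : IsMinOn (‖·‖) K g₀) {g : F} (hg : g ∈ K) : ‖g₀‖ ^ 2 ≤ ⟪g₀, g⟫ := by
  have : Nonempty K := ⟨⟨g₀, hg₀⟩⟩
  have hinf : ‖0 - g₀‖ = ⨅ w : K, ‖0 - (w : F)‖ := by
    simp only [zero_sub, norm_neg]
    exact le_antisymm (le_ciInf fun w => isMinOn_iff.1 hmin w w.2)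
      (ciInf_le (f := fun w : K => ‖(w : F)‖) ⟨0, forall_mem_range.2 fun w => norm_nonneg _⟩
        ⟨g₀, hg₀⟩)
  have := (norm_eq_iInf_iff_real_inner_le_zero hK hg₀).1 hinf g hg
  rw [zero_sub, inner_neg_left, inner_sub_right, real_inner_self_eq_norm_sq] at this
  linarith

theorem ConvexOn.exists_mem_subdifferential_inner_eq_rightDirDeriv [FiniteDimensional ℝ F]
    {f : F → ℝ} (hf : ConvexOn ℝ univ f) (x v : F) :
    ∃ g ∈ subdifferential f x, ⟪g, v⟫ = rightDirDeriv f x v := by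
  obtain ⟨ℓ, hℓv, hℓ⟩ := hf.exists_linear_subgradient_eq_rightDirDeriv x v
  set g := (InnerProductSpace.toDual ℝ F).symm (LinearMap.toContinuousLinearMap ℓ)
  have hg : ∀ w, ⟪g, w⟫ = ℓ w := fun w => InnerProductSpace.toDual_symm_apply
  exact ⟨g, fun y => (hg (y - x)).symm ▸ hℓ y, (hg v).trans hℓv⟩

end Subdifferential

theorem descent_direction (N : ℕ) (f : EuclideanSpace ℝ (Fin N) → ℝ)
    (hf : ConvexOn ℝ Set.univ f)
    (x g₀ : EuclideanSpace ℝ (Fin N))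
    (hg₀ : ∀ y, f x + ⟪g₀, y - x⟫ ≤ f y)
    (hmin : ∀ g, (∀ y, f x + ⟪g, y - x⟫ ≤ f y) → ‖g₀‖ ≤ ‖g‖)
    (hne : g₀ ≠ 0) :
    ∃ T > 0, ∀ t : ℝ, 0 < t → t < T →
      f (x - t • g₀) ≤ f x - t / 2 * ‖g₀‖ ^ 2 := by
  have hpos : 0 < ‖g₀‖ ^ 2 := pow_pos (norm_pos_iff.2 hne) 2
  obtain ⟨G, hG, hGv⟩ := hf.exists_mem_subdifferential_inner_eq_rightDirDeriv x (-g₀)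
  have hD : rightDirDeriv f x (-g₀) < -(‖g₀‖ ^ 2 / 2) := by
    have := (convex_subdifferential f x).norm_sq_le_inner_of_isMinOn_norm hg₀
      (isMinOn_iff.2 hmin) hG
    rw [← hGv, inner_neg_right, real_inner_comm]
    linarith
  obtain ⟨T, hT, hsec⟩ := hf.exists_forall_dirSecant_lt x (-g₀) hD
  refine ⟨T, hT, fun t ht htT => ?_⟩
  have := hsec t ht htT
  rw [dirSecant, div_lt_iff₀ ht, smul_neg, ← sub_eq_add_neg] at this
  linarith
end

section
/- Let Q be a convex polygon in R^2 with inradius IR(Q) and incenter set IC(Q). If p ∈ Q satisfies: for every unit vector w ∈ R^2 there exists an edge e of Q with D_e(p) = sm_Q(p) and w · n_e > 0, then p is a strict local maximum of sm_Q and IC(Q) = {p}. -/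
open RealInnerProductSpace

theorem strict_local_max_incenter {E : Type*} [Fintype E] [Nonempty E]
    (n : E → EuclideanSpace ℝ (Fin 2)) (c : E → ℝ) (hn : ∀ e, ‖n e‖ = 1)
    (Q : Set (EuclideanSpace ℝ (Fin 2)))
    (hQ : Q = {p | ∀ e, c e ≤ ⟪n e, p⟫}) (hQc : IsCompact Q)
    (D : E → EuclideanSpace ℝ (Fin 2) → ℝ)
    (hD : D = fun e p => ⟪n e, p⟫ - c e)
    (sm : EuclideanSpace ℝ (Fin 2) → ℝ)
    (hsm : sm = fun p => Finset.univ.inf' Finset.univ_nonempty (fun e => D e p))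
    (IC : Set (EuclideanSpace ℝ (Fin 2)))
    (hIC : IC = {x | x ∈ Q ∧ ∀ q ∈ Q, sm q ≤ sm x})
    (p : EuclideanSpace ℝ (Fin 2)) (hp : p ∈ Q)
    (hspan : ∀ w : EuclideanSpace ℝ (Fin 2), ‖w‖ = 1 →
      ∃ e, D e p = sm p ∧ ⟪w, n e⟫ > 0) :
    (∃ ε > 0, ∀ q ∈ Q, q ≠ p → ‖q - p‖ < ε → sm q < sm p) ∧ IC = {p} := by
  have key : ∀ q : EuclideanSpace ℝ (Fin 2), q ≠ p → sm q < sm p := by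
    intro q hq
    have hne : q - p ≠ 0 := sub_ne_zero.mpr hq
    have hnormpos : 0 < ‖q - p‖ := norm_pos_iff.mpr hne
    have hw : ‖(-(‖q - p‖⁻¹ • (q - p)) : EuclideanSpace ℝ (Fin 2))‖ = 1 := by
      rw [norm_neg, norm_smul, norm_inv, norm_norm, inv_mul_cancel₀ hnormpos.ne']
    obtain ⟨e, he, hpos⟩ := hspan _ hw
    have h1 : ⟪q - p, n e⟫ < 0 := by
      rw [inner_neg_left, real_inner_smul_left] at hpos
      nlinarith [inv_pos.mpr hnormpos]
    have h2 : sm q ≤ D e q := by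
      rw [hsm]; exact Finset.inf'_le _ (Finset.mem_univ e)
    have h3 : D e q = D e p + ⟪n e, q - p⟫ := by
      rw [hD]; simp only [inner_sub_right]; ring
    have h4 : ⟪n e, q - p⟫ < 0 := by rw [real_inner_comm]; exact h1
    calc sm q ≤ D e q := h2
      _ < sm p := by rw [h3, he]; linarith
  constructor
  · exact ⟨1, one_pos, fun q _ hne _ => key q hne⟩
  · ext x
    rw [hIC]
    constructor
    · rintro ⟨hxQ, hmax⟩
      by_contra hxp
      exact absurd (hmax p hp) (not_le.mpr (key x hxp))
    · rintro rfl
      refine ⟨hp, fun q _ => ?_⟩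
      by_cases h : q = x
      · subst h; exact le_refl _
      · exact (key q h).le
end

section
/- Let Q be a convex polygon in R^2, P = (p_1,...,p_n) ∈ Q^n with distinct points, and suppose v ∈ Q attains H_DC(P) (i.e., v ∈ V_i and ‖v − p_i‖ = H_DC(P) for some i) with v lying in the interior of Q. Then for every line l through v there exist generators p_j, p_k with v ∈ V_j ∩ V_k lying strictly on opposite sides of l. -/
open RealInnerProductSpace

lemma aux_one_side (Q : Set (EuclideanSpace ℝ (Fin 2)))
    (n : ℕ) (hn : 1 ≤ n) (P : Fin n → EuclideanSpace ℝ (Fin 2))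
    (Vor : Fin n → Set (EuclideanSpace ℝ (Fin 2)))
    (hVor : Vor = fun i => {q | q ∈ Q ∧ ∀ j, ‖q - P i‖ ≤ ‖q - P j‖})
    (v : EuclideanSpace ℝ (Fin 2)) (i : Fin n)
    (hvQ : v ∈ interior Q) (hvVi : v ∈ Vor i)
    (hmax : ∀ q ∈ Q, Finset.univ.inf' (Finset.univ_nonempty_iff.mpr (Fin.pos_iff_nonempty.mp hn)) (fun j => ‖q - P j‖)
      ≤ ‖v - P i‖) :
    ∀ u : EuclideanSpace ℝ (Fin 2), u ≠ 0 →
      ∃ j, v ∈ Vor j ∧ 0 < ⟪P j - v, u⟫ := by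
  intro u hu
  subst hVor
  set r : ℝ := ‖v - P i‖ with hr
  have hvQ' : v ∈ Q := hvVi.1
  have hrle : ∀ j, r ≤ ‖v - P j‖ := hvVi.2
  by_contra hcon
  push_neg at hcon
  have hne : (Finset.univ : Finset (Fin n)).Nonempty :=
    Finset.univ_nonempty_iff.mpr (Fin.pos_iff_nonempty.mp hn)
  -- ball inside Q
  obtain ⟨ε, εpos, hball⟩ : ∃ ε > 0, Metric.ball v ε ⊆ Q := by
    rcases Metric.mem_nhds_iff.mp (mem_interior_iff_mem_nhds.mp hvQ) with ⟨ε, εpos, hb⟩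
    exact ⟨ε, εpos, hb⟩
  set c : ℝ := Finset.univ.inf' hne (fun j => if ‖v - P j‖ ≤ r then 1 else ‖v - P j‖ - r) with hc
  have hcpos : 0 < c := by
    rw [hc, Finset.lt_inf'_iff]
    intro j _
    by_cases hj : ‖v - P j‖ ≤ r
    · simp [hj]
    · simp only [hj, if_false]
      push_neg at hj
      linarith
  have hupos : (0:ℝ) < ‖u‖ := norm_pos_iff.mpr hu
  set t : ℝ := min ε c / (2 * ‖u‖) with ht
  have htpos : 0 < t := by
    apply div_pos (lt_min εpos hcpos) (by positivity)
  have htu : t * ‖u‖ = min ε c / 2 := by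
    rw [ht]; field_simp
  have htuε : t * ‖u‖ < ε := by
    rw [htu]; have := min_le_left ε c; linarith
  have htuc : t * ‖u‖ < c := by
    rw [htu]; have := min_le_right ε c; linarith
  set q : EuclideanSpace ℝ (Fin 2) := v + t • u with hqdef
  have hnorm_tu : ‖t • u‖ = t * ‖u‖ := by
    rw [norm_smul, Real.norm_eq_abs, abs_of_pos htpos]
  have hqQ : q ∈ Q := by
    apply hball
    simp only [Metric.mem_ball, hqdef, dist_eq_norm]
    simpa [hnorm_tu] using htuε
  have hqeq : ∀ j, q - P j = (v - P j) + t • u := by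
    intro j; rw [hqdef]; abel
  have h1 : ∀ j, r < ‖q - P j‖ := by
    intro j
    by_cases hj : ‖v - P j‖ ≤ r
    · -- nearest generator
      have heq : ‖v - P j‖ = r := le_antisymm hj (hrle j)
      have hmem : v ∈ {q | q ∈ Q ∧ ∀ k, ‖q - P j‖ ≤ ‖q - P k‖} := by
        refine ⟨hvQ', fun k => ?_⟩
        rw [heq]; exact hrle k
      have hip : ⟪P j - v, u⟫ ≤ 0 := hcon j hmem
      have hip' : 0 ≤ ⟪v - P j, u⟫ := by
        have : v - P j = -(P j - v) := by abel
        rw [this, inner_neg_left]; linarith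
      have hsq : r ^ 2 < ‖q - P j‖ ^ 2 := by
        rw [hqeq j, norm_add_sq_real, real_inner_smul_right, heq, hnorm_tu]
        nlinarith [mul_pos (mul_pos htpos hupos) (mul_pos htpos hupos), hip', htpos]
      exact lt_of_pow_lt_pow_left₀ 2 (norm_nonneg _) hsq
    · -- far generator
      push_neg at hj
      have hcle : c ≤ ‖v - P j‖ - r := by
        have := Finset.inf'_le (b := j)
          (f := fun j => if ‖v - P j‖ ≤ r then 1 else ‖v - P j‖ - r) (Finset.mem_univ j)
        rw [if_neg (not_le.mpr hj)] at this
        exact this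
      have htri : ‖v - P j‖ ≤ ‖q - P j‖ + ‖t • u‖ := by
        have : v - P j = (q - P j) + (-(t • u)) := by rw [hqeq j]; abel
        calc ‖v - P j‖ = ‖(q - P j) + (-(t • u))‖ := by rw [← this]
          _ ≤ ‖q - P j‖ + ‖-(t • u)‖ := norm_add_le _ _
          _ = ‖q - P j‖ + ‖t • u‖ := by rw [norm_neg]
      rw [hnorm_tu] at htri
      linarith
  have h2 := hmax q hqQ
  have h3 : r < Finset.univ.inf' hne (fun j => ‖q - P j‖) := by
    rw [Finset.lt_inf'_iff]; exact fun j _ => h1 j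
  have h4 : Finset.univ.inf'
      (Finset.univ_nonempty_iff.mpr (Fin.pos_iff_nonempty.mp hn))
      (fun j => ‖q - P j‖) = Finset.univ.inf' hne (fun j => ‖q - P j‖) := rfl
  rw [h4] at h2
  linarith

theorem generators_on_both_sides (V : Finset (EuclideanSpace ℝ (Fin 2)))
    (hV : V.Nonempty) (Q : Set (EuclideanSpace ℝ (Fin 2)))
    (hQ : Q = convexHull ℝ (V : Set (EuclideanSpace ℝ (Fin 2))))
    (n : ℕ) (hn : 1 ≤ n) (P : Fin n → EuclideanSpace ℝ (Fin 2))
    (hP : ∀ i, P i ∈ Q) (hinj : Function.Injective P)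
    (Vor : Fin n → Set (EuclideanSpace ℝ (Fin 2)))
    (hVor : Vor = fun i => {q | q ∈ Q ∧ ∀ j, ‖q - P i‖ ≤ ‖q - P j‖})
    (v : EuclideanSpace ℝ (Fin 2)) (i : Fin n)
    (hvQ : v ∈ interior Q) (hvVi : v ∈ Vor i)
    (hmax : ∀ q ∈ Q, Finset.univ.inf' (Finset.univ_nonempty_iff.mpr (Fin.pos_iff_nonempty.mp hn)) (fun j => ‖q - P j‖)
      ≤ ‖v - P i‖) :
    ∀ w : EuclideanSpace ℝ (Fin 2), w ≠ 0 →
      ∃ j k, v ∈ Vor j ∧ v ∈ Vor k ∧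
        ⟪P j - v, w⟫ > 0 ∧ ⟪P k - v, w⟫ < 0 := by
  intro w hw
  obtain ⟨j, hjV, hjpos⟩ := aux_one_side Q n hn P Vor hVor v i hvQ hvVi hmax w hw
  obtain ⟨k, hkV, hkpos⟩ := aux_one_side Q n hn P Vor hVor v i hvQ hvVi hmax (-w) (neg_ne_zero.mpr hw)
  refine ⟨j, k, hjV, hkV, hjpos, ?_⟩
  rw [inner_neg_right] at hkpos
  linarith
end
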